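/- Let G be a finite simple graph with at least one vertex. If there exists a 0-1 state v on G, then α(G; c_G) = c(G) and ∑_{i ∈ V(G)} c_G(i)·v(i) = α(G; c_G). -/

import Mathlib

open Finset

/-- A maximal clique of a simple graph, as a finite set of vertices. -/
def IsMaxClique {V : Type*} (G : SimpleGraph V) (C : Finset V) : Prop :=
  G.IsClique (C : Set V) ∧ ∀ D : Finset V, G.IsClique (D : Set V) → C ⊆ D → D = C

/-- The finite set of all maximal cliques of a finite simple graph. -/
noncomputable def maxCliques {V : Type*} [Fintype V] (G : SimpleGraph V) :
    Finset (Finset V) := by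
  classical exact Finset.univ.filter (fun C => IsMaxClique G C)

/-- `c(G)`: the total number of maximal cliques of `G`. -/
noncomputable def numMaxCliques {V : Type*} [Fintype V] (G : SimpleGraph V) : ℕ :=
  (maxCliques G).card

/-- `c_G(i)`: the number of maximal cliques of `G` containing the vertex `i`. -/
noncomputable def cG {V : Type*} [Fintype V] (G : SimpleGraph V) (i : V) : ℕ := by
  classical exact ((maxCliques G).filter (fun C => i ∈ C)).card

/-- A state on a finite simple graph: values in `[0,1]` summing to `1` on each
maximal clique. -/
def IsGraphState {V : Type*} [Fintype V] (G : SimpleGraph V) (p : V → ℝ) : Prop :=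
  (∀ i, 0 ≤ p i ∧ p i ≤ 1) ∧ ∀ C ∈ maxCliques G, ∑ i ∈ C, p i = 1

/-- An independent set of a simple graph: pairwise non-adjacent vertices. -/
def IsIndep {V : Type*} (G : SimpleGraph V) (I : Finset V) : Prop :=
  ∀ i ∈ I, ∀ j ∈ I, i ≠ j → ¬ G.Adj i j

/-- `α(G; w)`: the maximum weight of an independent set of `G` for the weight `w`. -/
noncomputable def alphaW {V : Type*} [Fintype V] (G : SimpleGraph V) (w : V → ℝ) : ℝ :=
  sSup { x : ℝ | ∃ I : Finset V, IsIndep G I ∧ x = ∑ i ∈ I, w i }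

/-!
The vertices where a 0-1 state equals `1` form an independent set meeting every maximal clique
exactly once. Double counting incidences between an independent set `I` and the maximal cliques
gives `∑ i ∈ I, c_G(i) = ∑_C |C ∩ I|`, which is at most `c(G)` for every independent set since a
clique meets it at most once, with equality for this transversal.
-/

lemma sum_mul_eq_sum_filter_of_eq_zero_or_one {ι : Type*} {v : ι → ℝ}
    (h01 : ∀ i, v i = 0 ∨ v i = 1) (w : ι → ℝ) (s : Finset ι) :
    ∑ i ∈ s, w i * v i = ∑ i ∈ s.filter (v · = 1), w i := by
  rw [sum_filter]
  refine sum_congr rfl fun i _ => ?_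
  rcases h01 i with h | h <;> simp [h]

section

variable {V : Type*} [Fintype V]

lemma isClique_of_mem_maxCliques {G : SimpleGraph V} {C : Finset V} (hC : C ∈ maxCliques G) :
    G.IsClique (C : Set V) := by
  classical
  simp only [maxCliques, mem_filter] at hC
  exact hC.2.1

lemma exists_mem_maxCliques_superset {G : SimpleGraph V} {D : Finset V}
    (hD : G.IsClique (D : Set V)) : ∃ C ∈ maxCliques G, D ⊆ C := by
  classical
  obtain ⟨C, hC, hmax⟩ := exists_max_image
    (univ.filter fun E : Finset V => G.IsClique (E : Set V) ∧ D ⊆ E) card ⟨D, by simp [hD]⟩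
  simp only [mem_filter, mem_univ, true_and] at hC hmax
  refine ⟨C, ?_, hC.2⟩
  simp only [maxCliques, mem_filter, mem_univ, true_and]
  exact ⟨hC.1, fun E hE hCE =>
    (eq_of_subset_of_card_le hCE (hmax E ⟨hE, hC.2.trans hCE⟩)).symm⟩

variable [DecidableEq V]

def IsCliqueTransversal (G : SimpleGraph V) (I : Finset V) : Prop :=
  ∀ C ∈ maxCliques G, #(C ∩ I) = 1

lemma IsIndep.card_inter_le_one {G : SimpleGraph V} {I C : Finset V} (hI : IsIndep G I)
    (hC : C ∈ maxCliques G) : #(C ∩ I) ≤ 1 := by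
  refine card_le_one.mpr fun a ha b hb => by_contra fun hab => ?_
  rw [mem_inter] at ha hb
  exact hI a ha.2 b hb.2 hab (isClique_of_mem_maxCliques hC ha.1 hb.1 hab)

lemma IsCliqueTransversal.isIndep {G : SimpleGraph V} {I : Finset V}
    (hI : IsCliqueTransversal G I) : IsIndep G I := by
  intro i hi j hj hij hadj
  have hpair : G.IsClique (({i, j} : Finset V) : Set V) := by
    rw [coe_pair]
    exact SimpleGraph.isClique_pair.mpr fun _ => hadj
  obtain ⟨C, hC, hsub⟩ := exists_mem_maxCliques_superset hpair
  have : 1 < #(C ∩ I) := one_lt_card.mpr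
    ⟨i, mem_inter.mpr ⟨hsub (by simp), hi⟩, j, mem_inter.mpr ⟨hsub (by simp), hj⟩, hij⟩
  exact this.ne' (hI C hC)

lemma sum_cG_eq_sum_card_inter (G : SimpleGraph V) (I : Finset V) :
    ∑ i ∈ I, cG G i = ∑ C ∈ maxCliques G, #(C ∩ I) := by
  simp only [cG, card_filter]
  rw [sum_comm]
  refine sum_congr rfl fun C _ => ?_
  rw [inter_comm, ← filter_mem_eq_inter, card_filter]
  convert rfl

lemma IsIndep.sum_cG_le_numMaxCliques {G : SimpleGraph V} {I : Finset V} (hI : IsIndep G I) :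
    ∑ i ∈ I, cG G i ≤ numMaxCliques G := by
  rw [sum_cG_eq_sum_card_inter, numMaxCliques, card_eq_sum_ones]
  exact sum_le_sum fun C hC => hI.card_inter_le_one hC

lemma IsCliqueTransversal.sum_cG_eq_numMaxCliques {G : SimpleGraph V} {I : Finset V}
    (hI : IsCliqueTransversal G I) : ∑ i ∈ I, cG G i = numMaxCliques G := by
  rw [sum_cG_eq_sum_card_inter, numMaxCliques, card_eq_sum_ones]
  exact sum_congr rfl hI

lemma IsCliqueTransversal.alphaW_cG_eq_numMaxCliques {G : SimpleGraph V} {I : Finset V}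
    (hI : IsCliqueTransversal G I) :
    alphaW G (fun i => (cG G i : ℝ)) = numMaxCliques G := by
  refine IsGreatest.csSup_eq ⟨⟨I, hI.isIndep, ?_⟩, ?_⟩
  · rw [← hI.sum_cG_eq_numMaxCliques]
    push_cast
    rfl
  · rintro x ⟨J, hJ, rfl⟩
    simp only [← Nat.cast_sum, Nat.cast_le]
    exact hJ.sum_cG_le_numMaxCliques

lemma IsGraphState.isCliqueTransversal {G : SimpleGraph V} {v : V → ℝ}
    (hv : IsGraphState G v) (h01 : ∀ i, v i = 0 ∨ v i = 1) :
    IsCliqueTransversal G (univ.filter (v · = 1)) := by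
  intro C hC
  have hsum := hv.2 C hC
  rw [← sum_congr rfl fun i _ => one_mul (v i),
    sum_mul_eq_sum_filter_of_eq_zero_or_one h01, sum_const, nsmul_one] at hsum
  rw [← filter_mem_eq_inter]
  simp only [mem_filter, mem_univ, true_and]
  exact_mod_cast hsum

end

theorem alpha_eq_of_zeroOneState_general {V : Type*} [Fintype V]
    (G : SimpleGraph V) (v : V → ℝ)
    (hv : IsGraphState G v) (h01 : ∀ i, v i = 0 ∨ v i = 1) :
    alphaW G (fun i => (cG G i : ℝ)) = (numMaxCliques G : ℝ) ∧
    ∑ i : V, (cG G i : ℝ) * v i = alphaW G (fun i => (cG G i : ℝ)) := by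
  classical
  have hT := hv.isCliqueTransversal h01
  refine ⟨hT.alphaW_cG_eq_numMaxCliques, ?_⟩
  rw [hT.alphaW_cG_eq_numMaxCliques, sum_mul_eq_sum_filter_of_eq_zero_or_one h01]
  exact_mod_cast hT.sum_cG_eq_numMaxCliques

/-- **If a finite simple graph `G` (with at least one vertex) has a 0-1 state `v`, then
`α(G; c_G) = c(G)` and `∑ i, c_G(i)·v(i) = α(G; c_G)`.** -/
theorem alpha_eq_of_zeroOneState {V : Type*} [Fintype V] [Nonempty V]
    (G : SimpleGraph V) (v : V → ℝ)
    (hv : IsGraphState G v) (h01 : ∀ i, v i = 0 ∨ v i = 1) :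
    alphaW G (fun i => (cG G i : ℝ)) = (numMaxCliques G : ℝ) ∧
    ∑ i : V, (cG G i : ℝ) * v i = alphaW G (fun i => (cG G i : ℝ)) :=
  alpha_eq_of_zeroOneState_general G v hv h01
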